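/- Let G be a group, R an integral domain, ρ : G → GL(l, R) a representation, φ : G → ℤⁿ a surjective homomorphism, C_* a bounded chain complex of finitely generated free right ℤ[G]-modules, and let k ≥ 0, q > 0. Then there is a finite family of proper full subgroups G_1, …, G_s of Hom(ℤⁿ, ℤ) such that for every nonzero homomorphism ξ : ℤⁿ → ℝ, factored as ξ = ξ̃ ∘ p_ξ with p_ξ : ℤⁿ → ℤᵐ surjective and ξ̃ : ℤᵐ → ℝ injective, the condition b_k(C_*, ρ; p_ξ) ≥ b_k°(C_*, ρ) + q holds if and only if ξ belongs to the union of the ℝ-linear spans of the G_i inside Hom(ℤⁿ, ℝ) (i.e. ξ ∈ ⋃_i G_i ⊗ ℝ). -/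

import Mathlib

/-- A finite free chain complex `0 ← C_0 ← C_1 ← ⋯ ← C_N ← 0` over a ring `T`,
recorded by the ranks `c k` of its finitely generated free chain modules and the
matrices of its boundary operators; `d k` is the matrix of `∂_{k+1} : C_{k+1} → C_k`. -/
structure FinFreeChainComplex (T : Type) [Ring T] where
  N : ℕ
  c : ℕ → ℕ
  bounded : ∀ k : ℕ, N < k → c k = 0
  d : ∀ k : ℕ, Matrix (Fin (c k)) (Fin (c (k + 1))) T
  dsq : ∀ k : ℕ, d k * d (k + 1) = 0

/-- The rank, over the fraction field `{U}` of `U`, of the matrix of `∂_{k+1}`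
with entries mapped by the ring homomorphism `φ : T →+* U`. -/
noncomputable def FinFreeChainComplex.bdryRank {T U : Type} [Ring T] [CommRing U]
    (C : FinFreeChainComplex T) (φ : T →+* U) (k : ℕ) : ℕ :=
  ((C.d k).map ⇑((algebraMap U (FractionRing U)).comp φ)).rank

/-- The rank, over `{U}`, of the matrix of `∂_k : C_k → C_{k-1}` (with `∂_0 = 0`)
with entries mapped by `φ`. -/
noncomputable def FinFreeChainComplex.bdryRankAt {T U : Type} [Ring T] [CommRing U]
    (C : FinFreeChainComplex T) (φ : T →+* U) (k : ℕ) : ℕ :=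
  match k with
  | 0 => 0
  | k' + 1 => C.bdryRank φ k'

/-- `b_k(C_*, φ) = dim_{{U}} H_k(C_* ⊗_φ {U}) = c_k − rk φ(∂_k) − rk φ(∂_{k+1})`. -/
noncomputable def FinFreeChainComplex.bettiMap {T U : Type} [Ring T] [CommRing U]
    (C : FinFreeChainComplex T) (φ : T →+* U) (k : ℕ) : ℕ :=
  C.c k - C.bdryRankAt φ k - C.bdryRank φ k

/-- `b_k(C_*) = dim_{{T}} H_k(C_* ⊗_T {T})`. -/
noncomputable def FinFreeChainComplex.betti {T : Type} [CommRing T]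
    (C : FinFreeChainComplex T) (k : ℕ) : ℕ :=
  C.bettiMap (RingHom.id T) k


/-- Flattening of a block matrix: a matrix of `l × l` matrices becomes an ordinary matrix. -/
def blockFlatten {a b l : ℕ} {S : Type}
    (M : Matrix (Fin a) (Fin b) (Matrix (Fin l) (Fin l) S)) :
    Matrix (Fin a × Fin l) (Fin b × Fin l) S :=
  Matrix.of fun ik jl => M ik.1 jl.1 ik.2 jl.2

/-- The ring homomorphism `ℤ[G] → Mat_l(S)` induced by a representation
`τ : G →* GL(l, S)`. -/
noncomputable def reprMatRingHom {G : Type} [Group G] {l : ℕ} {S : Type} [CommRing S]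
    (τ : G →* GL (Fin l) S) : MonoidAlgebra ℤ G →+* Matrix (Fin l) (Fin l) S :=
  ((MonoidAlgebra.lift ℤ (Matrix (Fin l) (Fin l) S) G)
    ((Units.coeHom (Matrix (Fin l) (Fin l) S)).comp τ)).toRingHom

/-- The rank over the fraction field `{S}` of the matrix of `∂_{k+1} ⊗ 1` in the
complex `C_* ⊗_{ℤ[G], τ} {S}^l`. -/
noncomputable def reprBdryRank {G : Type} [Group G] {l : ℕ} {S : Type} [CommRing S]
    (C : FinFreeChainComplex (MonoidAlgebra ℤ G)) (τ : G →* GL (Fin l) S) (k : ℕ) : ℕ :=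
  ((blockFlatten ((C.d k).map ⇑(reprMatRingHom τ))).map
    ⇑(algebraMap S (FractionRing S))).rank

/-- The rank over `{S}` of the matrix of `∂_k ⊗ 1` (with `∂_0 = 0`). -/
noncomputable def reprBdryRankAt {G : Type} [Group G] {l : ℕ} {S : Type} [CommRing S]
    (C : FinFreeChainComplex (MonoidAlgebra ℤ G)) (τ : G →* GL (Fin l) S) (k : ℕ) : ℕ :=
  match k with
  | 0 => 0
  | k' + 1 => reprBdryRank C τ k'

/-- `b_k(C_*, τ) = dim_{{S}} H_k(C_* ⊗_{ℤ[G], τ} {S}^l)` for a representation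
`τ : G →* GL(l, S)` into an integral domain `S`. -/
noncomputable def reprBetti {G : Type} [Group G] {l : ℕ} {S : Type} [CommRing S]
    (C : FinFreeChainComplex (MonoidAlgebra ℤ G)) (τ : G →* GL (Fin l) S) (k : ℕ) : ℕ :=
  C.c k * l - reprBdryRankAt C τ k - reprBdryRank C τ k

/-- The homomorphism `GL(l, S) →* GL(l, S')` induced by a ring homomorphism `S →+* S'`. -/
def glMap {l : ℕ} {S S' : Type} [CommRing S] [CommRing S'] (f : S →+* S') :
    GL (Fin l) S →* GL (Fin l) S' :=
  Units.map f.mapMatrix.toMonoidHom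

/-- The natural embedding of `Hom(ℤⁿ, ℤ)` into the real vector space `Hom(ℤⁿ, ℝ)`
(additive homomorphisms `ℤⁿ → ℝ`, viewed as `ℤ`-linear maps so as to carry an
`ℝ`-module structure). -/
def homToReal {n : ℕ} (h : (Fin n → ℤ) →+ ℤ) : (Fin n → ℤ) →ₗ[ℤ] ℝ :=
  ((Int.castAddHom ℝ).comp h).toIntLinearMap


/-!
Over a field, `rank A ≥ t` iff some `t × t` minor of `A` is nonzero, so the specialised rank
`rank (p_* E)` is at least `t` iff some minor of `E` survives `p_*`. A Laurent polynomial `μ`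
is killed by `p_*` iff `ker p` contains one of finitely many subgroups, generated by differences
of exponents of `μ`, along which `μ` already collapses to zero. Conditions "`ker p` contains one
of finitely many given subgroups" are stable under finite conjunctions and disjunctions, hence
the jump `b_k(C_*, ρ; p) ≥ b_k°(C_*, ρ) + q` is such a condition, and none of the subgroups is
trivial since `p = id` gives no jump. For `ξ = ξ̃ ∘ p` with `ξ̃` injective, `ker p = ker ξ`; and
`K ≤ ker ξ` iff `ξ` lies in the real span of the annihilator of `K`, a direct summand of
`Hom(ℤⁿ, ℤ)` by the Smith normal form.
-/

open Finsupp

namespace Matrix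

variable {K : Type*} [Field K] {m n : Type*} [Fintype n]

theorem exists_linearIndependent_cols_of_le_rank (A : Matrix m n K) {t : ℕ} (ht : t ≤ A.rank) :
    ∃ c : Fin t → n, LinearIndependent K (A.col ∘ c) := by
  obtain ⟨κ, a, ha, hspan, hli⟩ := exists_linearIndependent' K A.col
  have : Fintype κ := .ofInjective a ha
  have hcard : A.rank = Fintype.card κ := by
    rw [rank_eq_finrank_span_cols, ← hspan, finrank_span_eq_card hli]
  obtain ⟨e⟩ : Nonempty (Fin t ↪ κ) :=
    Function.Embedding.nonempty_of_card_le (by rwa [Fintype.card_fin, ← hcard])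
  exact ⟨a ∘ e, hli.comp e e.injective⟩

theorem le_rank_iff_exists_det_submatrix_ne_zero [Fintype m] (A : Matrix m n K) (t : ℕ) :
    t ≤ A.rank ↔ ∃ (r : Fin t → m) (c : Fin t → n), (A.submatrix r c).det ≠ 0 := by
  classical
  constructor
  · intro ht
    obtain ⟨c, hc⟩ := A.exists_linearIndependent_cols_of_le_rank ht
    have hrank : (A.submatrix id c)ᵀ.rank = t := by
      simpa using LinearIndependent.rank_matrix (M := (A.submatrix id c)ᵀ) hc
    obtain ⟨r, hr⟩ := (A.submatrix id c)ᵀ.exists_linearIndependent_cols_of_le_rank hrank.ge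
    have hunit : IsUnit (A.submatrix r c) := linearIndependent_rows_iff_isUnit.mp hr
    exact ⟨r, c, ((isUnit_iff_isUnit_det _).mp hunit).ne_zero⟩
  · rintro ⟨r, c, hdet⟩
    calc t = (A.submatrix r c).rank := by rw [rank_of_det_ne_zero hdet, Fintype.card_fin]
      _ ≤ A.rank := rank_submatrix_le A r c

theorem le_rank_map_iff [Fintype m] {D : Type*} [CommRing D] (f : D →+* K) (A : Matrix m n D)
    (t : ℕ) :
    t ≤ (A.map f).rank ↔ ∃ (r : Fin t → m) (c : Fin t → n), f (A.submatrix r c).det ≠ 0 := by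
  simp_rw [le_rank_iff_exists_det_submatrix_ne_zero, submatrix_map, RingHom.map_det]
  rfl

end Matrix

section KernelLocus

variable {M : Type*} [AddCommGroup M]

/-- Codomains are restricted to `ℤᵐ`, for which `R[ℤᵐ]` is a domain. -/
def IsKernelLocus (P : ∀ m : ℕ, (M →+ (Fin m → ℤ)) → Prop) : Prop :=
  ∃ 𝒦 : Set (AddSubgroup M), 𝒦.Finite ∧ ∀ m p, P m p ↔ ∃ K ∈ 𝒦, K ≤ p.ker

theorem isKernelLocus_const (P : Prop) : IsKernelLocus fun (m : ℕ) (_ : M →+ (Fin m → ℤ)) => P :=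
  ⟨{K | P ∧ K = ⊥}, (Set.finite_singleton ⊥).subset fun _ hK => hK.2,
    fun _ _ => ⟨fun hP => ⟨⊥, ⟨hP, rfl⟩, bot_le⟩, fun ⟨_, hK, _⟩ => hK.1⟩⟩

theorem IsKernelLocus.and {P Q : ∀ m : ℕ, (M →+ (Fin m → ℤ)) → Prop} (hP : IsKernelLocus P)
    (hQ : IsKernelLocus Q) : IsKernelLocus fun m p => P m p ∧ Q m p := by
  obtain ⟨𝒦, h𝒦, hP⟩ := hP
  obtain ⟨ℒ, hℒ, hQ⟩ := hQ
  refine ⟨Set.image2 (· ⊔ ·) 𝒦 ℒ, h𝒦.image2 _ hℒ, fun m p => ?_⟩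
  simp only [hP, hQ, Set.mem_image2]
  constructor
  · rintro ⟨⟨K, hK, hKp⟩, ⟨L, hL, hLp⟩⟩
    exact ⟨K ⊔ L, ⟨K, hK, L, hL, rfl⟩, sup_le hKp hLp⟩
  · rintro ⟨_, ⟨K, hK, L, hL, rfl⟩, hp⟩
    exact ⟨⟨K, hK, le_sup_left.trans hp⟩, ⟨L, hL, le_sup_right.trans hp⟩⟩

theorem isKernelLocus_forall {ι : Type*} [Finite ι] {P : ι → ∀ m : ℕ, (M →+ (Fin m → ℤ)) → Prop}
    (hP : ∀ i, IsKernelLocus (P i)) : IsKernelLocus fun m p => ∀ i, P i m p := by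
  choose 𝒦 h𝒦 hP using hP
  have : ∀ i, Finite (𝒦 i) := fun i => (h𝒦 i).to_subtype
  refine ⟨Set.range fun Ks : ∀ i, 𝒦 i => ⨆ i, (Ks i : AddSubgroup M), Set.finite_range _,
    fun m p => ?_⟩
  simp only [hP, Set.exists_range_iff, iSup_le_iff]
  constructor
  · intro h
    choose K hK hKp using h
    exact ⟨fun i => ⟨K i, hK i⟩, hKp⟩
  · rintro ⟨Ks, hKs⟩ i
    exact ⟨Ks i, (Ks i).2, hKs i⟩

theorem isKernelLocus_exists {ι : Type*} [Finite ι] {P : ι → ∀ m : ℕ, (M →+ (Fin m → ℤ)) → Prop}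
    (hP : ∀ i, IsKernelLocus (P i)) : IsKernelLocus fun m p => ∃ i, P i m p := by
  choose 𝒦 h𝒦 hP using hP
  refine ⟨⋃ i, 𝒦 i, Set.finite_iUnion h𝒦, fun m p => ?_⟩
  simp only [hP, Set.mem_iUnion]
  constructor
  · rintro ⟨i, K, hK, hKp⟩
    exact ⟨K, ⟨i, hK⟩, hKp⟩
  · rintro ⟨K, ⟨i, hK⟩, hKp⟩
    exact ⟨i, K, hK, hKp⟩

theorem isKernelLocus_add_le {f g : ∀ m : ℕ, (M →+ (Fin m → ℤ)) → ℕ}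
    (hf : ∀ t, IsKernelLocus fun m p => f m p ≤ t) (hg : ∀ t, IsKernelLocus fun m p => g m p ≤ t)
    (T : ℕ) : IsKernelLocus fun m p => f m p + g m p ≤ T := by
  have key : ∀ m p, f m p + g m p ≤ T ↔ ∃ t : Fin (T + 1), f m p ≤ t ∧ g m p ≤ T - t :=
    fun m p => ⟨fun h => ⟨⟨f m p, by omega⟩, le_rfl, by dsimp only; omega⟩,
      fun ⟨t, h₁, h₂⟩ => by omega⟩
  simp_rw [key]
  exact isKernelLocus_exists fun t => (hf t).and (hg (T - t))

end KernelLocus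

section VanishingKernels

open scoped Pointwise

variable {R M : Type*} [AddCommMonoid R] [AddCommGroup M]

def vanishingKernels (μ : M →₀ R) : Set (AddSubgroup M) :=
  {K | (∃ S ⊆ (μ.support - μ.support : Set M), K = AddSubgroup.closure S) ∧
    mapDomain (QuotientAddGroup.mk' K) μ = 0}

theorem vanishingKernels_finite (μ : M →₀ R) : (vanishingKernels μ).Finite :=
  ((μ.support.finite_toSet.sub μ.support.finite_toSet).finite_subsets.image
    AddSubgroup.closure).subset fun _ ⟨⟨S, hS, hK⟩, _⟩ => ⟨S, hS, hK.symm⟩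

theorem mapDomain_eq_zero_iff_exists_vanishingKernels_le {N : Type*} [AddCommGroup N]
    (μ : M →₀ R) (p : M →+ N) :
    mapDomain p μ = 0 ↔ ∃ K ∈ vanishingKernels μ, K ≤ p.ker := by
  classical
  have hfactor : ∀ (K : AddSubgroup M) (hK : K ≤ p.ker), mapDomain p μ =
      mapDomain (QuotientAddGroup.lift K p hK) (mapDomain (QuotientAddGroup.mk' K) μ) :=
    fun K hK => by rw [← mapDomain_comp]; rfl
  constructor
  · intro h
    set K := AddSubgroup.closure ((μ.support - μ.support : Set M) ∩ p.ker)
    have hK : K ≤ p.ker := AddSubgroup.closure_le _ |>.mpr Set.inter_subset_right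
    refine ⟨K, ⟨⟨_, Set.inter_subset_left, rfl⟩, ?_⟩, hK⟩
    -- on the image of the support, `p` and the projection to `M ⧸ K` have the same fibres
    have hinj : Set.InjOn (QuotientAddGroup.lift K p hK) (QuotientAddGroup.mk' K '' μ.support) := by
      rintro _ ⟨x, hx, rfl⟩ _ ⟨y, hy, rfl⟩ hxy
      refine (QuotientAddGroup.eq_iff_sub_mem).mpr (AddSubgroup.subset_closure ⟨?_, ?_⟩)
      · exact Set.sub_mem_sub hx hy
      · simpa [sub_eq_zero] using hxy
    refine Finsupp.mapDomain_injOn _ hinj ?_ (by simp) (by rw [← hfactor, h, mapDomain_zero])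
    exact (Finset.coe_subset.mpr mapDomain_support).trans (Finset.coe_image).subset
  · rintro ⟨K, ⟨-, hμK⟩, hK⟩
    rw [hfactor K hK, hμK, mapDomain_zero]

theorem isKernelLocus_mapDomain_eq_zero (μ : M →₀ R) :
    IsKernelLocus fun (m : ℕ) (p : M →+ (Fin m → ℤ)) => mapDomain p μ = 0 :=
  ⟨_, vanishingKernels_finite μ, fun _ p => mapDomain_eq_zero_iff_exists_vanishingKernels_le μ p⟩

end VanishingKernels

section RankLocus

variable {R M : Type*} [CommRing R] [IsDomain R] [AddCommGroup M]

theorem isKernelLocus_rank_le {I J : Type*} [Fintype I] [Fintype J]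
    (E : Matrix I J (AddMonoidAlgebra R M)) (t : ℕ) :
    IsKernelLocus fun (m : ℕ) (p : M →+ (Fin m → ℤ)) =>
      (E.map ((algebraMap (AddMonoidAlgebra R (Fin m → ℤ))
        (FractionRing (AddMonoidAlgebra R (Fin m → ℤ)))).comp
          (AddMonoidAlgebra.mapDomainRingHom R p))).rank ≤ t := by
  have key : ∀ (m : ℕ) (p : M →+ (Fin m → ℤ)), (E.map ((algebraMap _
      (FractionRing (AddMonoidAlgebra R (Fin m → ℤ)))).comp
        (AddMonoidAlgebra.mapDomainRingHom R p))).rank ≤ t ↔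
      ∀ rc : (Fin (t + 1) → I) × (Fin (t + 1) → J),
        mapDomain p (E.submatrix rc.1 rc.2).det.coeff = 0 := by
    intro m p
    rw [← not_lt, Nat.lt_iff_add_one_le, Matrix.le_rank_map_iff]
    simp [AddMonoidAlgebra.mapDomain]
  simp_rw [key]
  exact isKernelLocus_forall fun _ => isKernelLocus_mapDomain_eq_zero _

end RankLocus

section TwistedBetti

variable {G : Type} [Group G] {l : ℕ}

theorem glMap_id {S : Type} [CommRing S] : glMap (l := l) (RingHom.id S) = .id _ := by
  ext
  simp [glMap]

theorem reprMatRingHom_glMap_comp {S S' : Type} [CommRing S] [CommRing S']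
    (f : S →+* S') (τ : G →* GL (Fin l) S) :
    reprMatRingHom ((glMap f).comp τ) = f.mapMatrix.comp (reprMatRingHom τ) := by
  apply MonoidAlgebra.ringHom_ext <;> intro <;>
    simp [reprMatRingHom, glMap, MonoidAlgebra.lift_single]

theorem reprBdryRank_glMap_comp {S S' : Type} [CommRing S] [CommRing S']
    (C : FinFreeChainComplex (MonoidAlgebra ℤ G)) (f : S →+* S') (τ : G →* GL (Fin l) S)
    (k : ℕ) : reprBdryRank C ((glMap f).comp τ) k =
      ((blockFlatten ((C.d k).map (reprMatRingHom τ))).map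
        ((algebraMap S' (FractionRing S')).comp f)).rank := by
  rw [reprBdryRank, reprMatRingHom_glMap_comp]
  rfl

variable {R M : Type} [CommRing R] [IsDomain R] [AddCommGroup M]
  (C : FinFreeChainComplex (MonoidAlgebra ℤ G)) (τ : G →* GL (Fin l) (AddMonoidAlgebra R M))
  (k : ℕ)

theorem isKernelLocus_reprBdryRank_le (t : ℕ) :
    IsKernelLocus fun (m : ℕ) (p : M →+ (Fin m → ℤ)) =>
      reprBdryRank C ((glMap (AddMonoidAlgebra.mapDomainRingHom R p)).comp τ) k ≤ t := by
  simp_rw [reprBdryRank_glMap_comp]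
  exact isKernelLocus_rank_le _ t

theorem isKernelLocus_reprBdryRankAt_le (t : ℕ) :
    IsKernelLocus fun (m : ℕ) (p : M →+ (Fin m → ℤ)) =>
      reprBdryRankAt C ((glMap (AddMonoidAlgebra.mapDomainRingHom R p)).comp τ) k ≤ t := by
  cases k with
  | zero => simpa [reprBdryRankAt] using isKernelLocus_const True
  | succ k => exact isKernelLocus_reprBdryRank_le C τ k t

theorem isKernelLocus_le_reprBetti {x : ℕ} (hx : 0 < x) :
    IsKernelLocus fun (m : ℕ) (p : M →+ (Fin m → ℤ)) =>
      x ≤ reprBetti C ((glMap (AddMonoidAlgebra.mapDomainRingHom R p)).comp τ) k := by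
  have key : ∀ b₁ b₂ : ℕ, x ≤ C.c k * l - b₁ - b₂ ↔ x ≤ C.c k * l ∧ b₁ + b₂ ≤ C.c k * l - x :=
    fun _ _ => by omega
  simp_rw [reprBetti, key]
  exact (isKernelLocus_const _).and (isKernelLocus_add_le
    (isKernelLocus_reprBdryRankAt_le C τ k) (isKernelLocus_reprBdryRank_le C τ k) _)

end TwistedBetti

section DualAnnihilator

variable {M : Type} [AddCommGroup M]

def AddSubgroup.dualAnnihilator (K : AddSubgroup M) : AddSubgroup (M →+ ℤ) where
  carrier := {h | ∀ v ∈ K, h v = 0}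
  add_mem' hh₁ hh₂ v hv := by simp [hh₁ v hv, hh₂ v hv]
  zero_mem' _ _ := rfl
  neg_mem' hh v hv := by simp [hh v hv]

theorem AddSubgroup.mem_dualAnnihilator {K : AddSubgroup M} {h : M →+ ℤ} :
    h ∈ K.dualAnnihilator ↔ K ≤ h.ker :=
  Iff.rfl

noncomputable def Module.Basis.dualAddMonoidHom {ι : Type} [Finite ι] [DecidableEq ι]
    (b : Module.Basis ι ℤ M) : Module.Basis ι ℤ (M →+ ℤ) :=
  b.dualBasis.map (addMonoidHomLequivInt ℤ).symm

@[simp]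
theorem Module.Basis.dualAddMonoidHom_apply {ι : Type} [Finite ι] [DecidableEq ι]
    (b : Module.Basis ι ℤ M) (i : ι) (v : M) : b.dualAddMonoidHom i v = b.repr v i := by
  simp [Module.Basis.dualAddMonoidHom]

@[simp]
theorem Module.Basis.dualAddMonoidHom_repr {ι : Type} [Finite ι] [DecidableEq ι]
    (b : Module.Basis ι ℤ M) (h : M →+ ℤ) (i : ι) : b.dualAddMonoidHom.repr h i = h (b i) := by
  simp [Module.Basis.dualAddMonoidHom]

theorem AddSubgroup.exists_basis_le_ker_iff [Module.Free ℤ M] [Module.Finite ℤ M]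
    (K : AddSubgroup M) : ∃ (ι : Type) (_ : Fintype ι) (b : Module.Basis ι ℤ M) (s : Set ι),
      ∀ {N : Type} [AddCommGroup N] [IsAddTorsionFree N] (h : M →+ N),
        K ≤ h.ker ↔ ∀ i ∈ s, h (b i) = 0 := by
  obtain ⟨r, ⟨bM, bN, f, a, hsnf⟩⟩ :=
    Submodule.smithNormalForm (Module.Free.chooseBasis ℤ M) (AddSubgroup.toIntSubmodule K)
  have ha : ∀ j, a j ≠ 0 := fun j ha => bN.ne_zero j (Subtype.ext (by simp [hsnf, ha]))
  have hK : K = AddSubgroup.closure (Set.range fun j => a j • bM (f j)) := by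
    have hrange : (Set.range fun j => a j • bM (f j)) =
        (AddSubgroup.toIntSubmodule K).subtype '' Set.range bN := by
      rw [← Set.range_comp]
      exact congrArg Set.range (funext fun j => (hsnf j).symm)
    rw [← Submodule.span_int_eq_addSubgroupClosure, hrange, ← Submodule.map_span, bN.span_eq,
      Submodule.map_subtype_top, AddSubgroup.toIntSubmodule_toAddSubgroup]
  refine ⟨_, inferInstance, bM, Set.range f, fun h => ?_⟩
  rw [hK, AddSubgroup.closure_le, Set.range_subset_iff, Set.forall_mem_range]
  exact forall_congr' fun j => by
    rw [SetLike.mem_coe, AddMonoidHom.mem_ker, map_zsmul,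
      IsAddTorsionFree.zsmul_eq_zero_iff_right (ha j)]

theorem AddSubgroup.dualAnnihilator_ne_top [Module.Free ℤ M] {K : AddSubgroup M} (hK : K ≠ ⊥) :
    K.dualAnnihilator ≠ ⊤ := by
  obtain ⟨v, hvK, hv⟩ := K.bot_or_exists_ne_zero.resolve_left hK
  let b := Module.Free.chooseBasis ℤ M
  obtain ⟨i, hi⟩ := Finsupp.ne_iff.mp (b.repr.map_ne_zero_iff.mpr hv)
  intro htop
  have : (b.coord i).toAddMonoidHom ∈ K.dualAnnihilator := htop ▸ AddSubgroup.mem_top _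
  exact hi (by simpa using this v hvK)

section AdaptedBasis

variable {K : AddSubgroup M} {ι : Type} [Fintype ι] [DecidableEq ι] {b : Module.Basis ι ℤ M}
  {s : Set ι} (hbs : ∀ h : M →+ ℤ, K ≤ h.ker ↔ ∀ i ∈ s, h (b i) = 0)
include hbs

theorem AddSubgroup.toIntSubmodule_dualAnnihilator_eq_span :
    AddSubgroup.toIntSubmodule K.dualAnnihilator =
      Submodule.span ℤ (b.dualAddMonoidHom '' sᶜ) := by
  ext h
  rw [Module.Basis.mem_span_image, ← SetLike.mem_coe, AddSubgroup.coe_toIntSubmodule,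
    SetLike.mem_coe, mem_dualAnnihilator, hbs]
  simp [Set.subset_def, not_imp_not]

theorem AddSubgroup.exists_isCompl_dualAnnihilator_of_basis :
    ∃ K', IsCompl K.dualAnnihilator K' := by
  refine ⟨AddSubgroup.toIntSubmodule.symm (Submodule.span ℤ (b.dualAddMonoidHom '' s)), ?_⟩
  rw [AddSubgroup.toIntSubmodule.isCompl_iff, OrderIso.apply_symm_apply,
    toIntSubmodule_dualAnnihilator_eq_span hbs]
  exact b.dualAddMonoidHom.linearIndependent.isCompl_span_image b.dualAddMonoidHom.span_eq
    isCompl_compl.symm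

end AdaptedBasis

theorem AddSubgroup.exists_isCompl_dualAnnihilator [Module.Free ℤ M] [Module.Finite ℤ M]
    (K : AddSubgroup M) : ∃ K', IsCompl K.dualAnnihilator K' := by
  classical
  obtain ⟨ι, _, b, s, hbs⟩ := K.exists_basis_le_ker_iff
  exact exists_isCompl_dualAnnihilator_of_basis fun h => hbs h

end DualAnnihilator

section RealSpan

variable {n : ℕ}

theorem toIntLinearMap_eq_sum_homToReal {ι : Type} [Fintype ι] [DecidableEq ι]
    (b : Module.Basis ι ℤ (Fin n → ℤ)) (ξ : (Fin n → ℤ) →+ ℝ) :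
    ξ.toIntLinearMap = ∑ i, ξ (b i) • homToReal (b.dualAddMonoidHom i) := by
  refine b.ext fun j => ?_
  simp [homToReal, Finsupp.single_apply]

theorem mem_span_homToReal_dualAnnihilator_iff (K : AddSubgroup (Fin n → ℤ))
    (ξ : (Fin n → ℤ) →+ ℝ) :
    ξ.toIntLinearMap ∈ Submodule.span ℝ (homToReal '' (K.dualAnnihilator : Set _)) ↔
      K ≤ ξ.ker := by
  classical
  constructor
  · intro hξ v hv
    change ξ.toIntLinearMap v = 0
    generalize ξ.toIntLinearMap = ψ at hξ
    induction hξ using Submodule.span_induction with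
    | mem ψ hψ =>
      obtain ⟨h, hh, rfl⟩ := hψ
      simp [homToReal, hh v hv]
    | zero => rfl
    | add _ _ _ _ h₁ h₂ => simp_all
    | smul a _ _ h => simp_all
  · intro hK
    obtain ⟨ι, _, b, s, hbs⟩ := K.exists_basis_le_ker_iff
    have hann := AddSubgroup.toIntSubmodule_dualAnnihilator_eq_span fun h => hbs h
    rw [toIntLinearMap_eq_sum_homToReal b]
    refine Submodule.sum_mem _ fun i _ => ?_
    by_cases hi : i ∈ s
    · simp [(hbs ξ).mp hK i hi]
    · refine Submodule.smul_mem _ _ (Submodule.subset_span ⟨_, ?_, rfl⟩)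
      rw [← AddSubgroup.coe_toIntSubmodule, SetLike.mem_coe, hann]
      exact Submodule.subset_span ⟨i, hi, rfl⟩

end RealSpan

theorem exists_jump_subgroups_novikov_general
    {G : Type} [Group G] {R : Type} [CommRing R] [IsDomain R] {n l : ℕ}
    (ρO : G →* GL (Fin l) (AddMonoidAlgebra R (Fin n → ℤ)))
    (C : FinFreeChainComplex (MonoidAlgebra ℤ G)) (k : ℕ) (q : ℕ) (hq : 0 < q) :
    ∃ (s : ℕ) (Gs : Fin s → AddSubgroup ((Fin n → ℤ) →+ ℤ)),
      (∀ i, (∃ K, IsCompl (Gs i) K) ∧ Gs i ≠ ⊤) ∧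
      ∀ (ξ : (Fin n → ℤ) →+ ℝ), ξ ≠ 0 →
        ∀ (m : ℕ) (pξ : (Fin n → ℤ) →+ (Fin m → ℤ)) (ξt : (Fin m → ℤ) →+ ℝ),
          Function.Surjective pξ → Function.Injective ξt → ξ = ξt.comp pξ →
          (reprBetti C ρO k + q ≤
            reprBetti C ((glMap (AddMonoidAlgebra.mapDomainRingHom R pξ)).comp ρO) k ↔
          ∃ i, ξ.toIntLinearMap ∈
            Submodule.span ℝ (homToReal '' (Gs i : Set ((Fin n → ℤ) →+ ℤ)))) := by
  obtain ⟨𝒦, h𝒦, hjump⟩ :=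
    isKernelLocus_le_reprBetti C ρO k (x := reprBetti C ρO k + q) (by omega)
  have hbot : ∀ K ∈ 𝒦, K ≠ ⊥ := by
    rintro K hK rfl
    have := (hjump n (AddMonoidHom.id _)).mpr ⟨⊥, hK, bot_le⟩
    simp only [AddMonoidAlgebra.mapDomainRingHom_id, glMap_id, MonoidHom.id_comp] at this
    omega
  have : Finite 𝒦 := h𝒦.to_subtype
  obtain ⟨s, ⟨e⟩⟩ := Finite.exists_equiv_fin 𝒦
  refine ⟨s, fun i => (e.symm i : AddSubgroup _).dualAnnihilator, fun i =>
    ⟨AddSubgroup.exists_isCompl_dualAnnihilator _,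
      AddSubgroup.dualAnnihilator_ne_top (hbot _ (e.symm i).2)⟩, ?_⟩
  intro ξ _ m pξ ξt _ hξt rfl
  simp_rw [hjump, mem_span_homToReal_dualAnnihilator_iff,
    AddMonoidHom.ker_comp_of_injective _ _ hξt]
  exact ⟨fun ⟨K, hK, hKp⟩ => ⟨e ⟨K, hK⟩, by simpa using hKp⟩,
    fun ⟨i, hi⟩ => ⟨_, (e.symm i).2, hi⟩⟩

/-- for a representation `ρ : G → GL(l, R)` over an integral domain `R`, a
surjection `φ : G → ℤⁿ`, the twisted representation `ρ°(g) = φ(g)·ρ(g)`, a bounded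
complex `C_*` of f.g. free right `ℤ[G]`-modules, and `k ≥ 0`, `q > 0`, there is a finite
family of proper full subgroups `G_1, …, G_s` of `Hom(ℤⁿ, ℤ)` such that for every
nonzero `ξ : ℤⁿ → ℝ`, factored as `ξ = ξ̃ ∘ p_ξ` with `p_ξ : ℤⁿ → ℤᵐ` surjective and
`ξ̃ : ℤᵐ → ℝ` injective, one has `b_k(C_*, ρ; p_ξ) ≥ b_k°(C_*, ρ) + q` iff `ξ` lies in
the union of the `ℝ`-linear spans of the `G_i` inside `Hom(ℤⁿ, ℝ)`. -/
theorem exists_jump_subgroups_novikov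
    {G : Type} [Group G] {R : Type} [CommRing R] [IsDomain R] {n l : ℕ}
    (ρ : G →* GL (Fin l) R)
    (φ : G →* Multiplicative (Fin n → ℤ)) (hφ : Function.Surjective φ)
    (ρO : G →* GL (Fin l) (AddMonoidAlgebra R (Fin n → ℤ)))
    (hρO : ∀ g : G, (ρO g : Matrix (Fin l) (Fin l) (AddMonoidAlgebra R (Fin n → ℤ))) =
      AddMonoidAlgebra.single (Multiplicative.toAdd (φ g)) (1 : R) •
        ((ρ g : Matrix (Fin l) (Fin l) R).map
          ⇑(algebraMap R (AddMonoidAlgebra R (Fin n → ℤ)))))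
    (C : FinFreeChainComplex (MonoidAlgebra ℤ G)) (k : ℕ) (q : ℕ) (hq : 0 < q) :
    ∃ (s : ℕ) (Gs : Fin s → AddSubgroup ((Fin n → ℤ) →+ ℤ)),
      (∀ i, (∃ K, IsCompl (Gs i) K) ∧ Gs i ≠ ⊤) ∧
      ∀ (ξ : (Fin n → ℤ) →+ ℝ), ξ ≠ 0 →
        ∀ (m : ℕ) (pξ : (Fin n → ℤ) →+ (Fin m → ℤ)) (ξt : (Fin m → ℤ) →+ ℝ),
          Function.Surjective pξ → Function.Injective ξt → ξ = ξt.comp pξ →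
          (reprBetti C ρO k + q ≤
            reprBetti C ((glMap (AddMonoidAlgebra.mapDomainRingHom R pξ)).comp ρO) k ↔
          ∃ i, ξ.toIntLinearMap ∈
            Submodule.span ℝ (homToReal '' (Gs i : Set ((Fin n → ℤ) →+ ℤ)))) :=
  exists_jump_subgroups_novikov_general ρO C k q hq
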